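/- Let E be a finite-dimensional real inner product space, let J : E → E be a self-adjoint positive-definite linear operator, and let α > 0 and β > 0. Define the hyperelastic stress map S on the set B = {ε ∈ E : ‖J ε‖ < 1/β} by S(ε) = (1 − (β·‖J ε‖)^α)^(−1/α) • J(J ε). Then S is strictly monotone on B: for all ε₁, ε₂ ∈ B with ε₁ ≠ ε₂, the inner product ⟨S(ε₁) − S(ε₂), ε₁ − ε₂⟩ is strictly positive. -/

import Mathlib

open Real Set
open scoped RealInnerProductSpace

/-!
Writing `u = J ε`, the symmetry of `J` turns `⟪S ε₁ - S ε₂, ε₁ - ε₂⟫` into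
`⟪Ψ ‖u₁‖ • u₁ - Ψ ‖u₂‖ • u₂, u₁ - u₂⟫`, and positivity of `J` makes `u₁ ≠ u₂`.
By Cauchy–Schwarz this pairing is at least `(Ψ ‖u₁‖ ‖u₁‖ - Ψ ‖u₂‖ ‖u₂‖) (‖u₁‖ - ‖u₂‖)`,
which is positive because `s ↦ Ψ s * s` is strictly increasing (`Ψ` is positive and
increasing); when `‖u₁‖ = ‖u₂‖` the pairing is `Ψ ‖u₁‖ ‖u₁ - u₂‖² > 0` instead.
-/

theorem MonotoneOn.strictMonoOn_mul_self {φ : ℝ → ℝ} {s : Set ℝ} (hφ : MonotoneOn φ s)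
    (hs : ∀ x ∈ s, 0 ≤ x) (hpos : ∀ x ∈ s, 0 < φ x) :
    StrictMonoOn (fun x => φ x * x) s := by
  intro x hx y hy hxy
  calc φ x * x ≤ φ y * x := mul_le_mul_of_nonneg_right (hφ hx hy hxy.le) (hs x hx)
    _ < φ y * y := mul_lt_mul_of_pos_left hxy (hpos y hy)

section RadialMap

variable {F : Type*} [NormedAddCommGroup F] [InnerProductSpace ℝ F]

theorem mul_sub_mul_norm_le_inner_smul_sub_smul (u v : F) {a b : ℝ} (ha : 0 ≤ a)
    (hb : 0 ≤ b) :
    (a * ‖u‖ - b * ‖v‖) * (‖u‖ - ‖v‖) ≤ ⟪a • u - b • v, u - v⟫ := by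
  have hexpand : ⟪a • u - b • v, u - v⟫ = a * ‖u‖ ^ 2 + b * ‖v‖ ^ 2 - (a + b) * ⟪u, v⟫ := by
    simp only [inner_sub_left, inner_sub_right, real_inner_smul_left,
      real_inner_self_eq_norm_sq, real_inner_comm u v]
    ring
  rw [hexpand]
  nlinarith [mul_le_mul_of_nonneg_left (real_inner_le_norm u v) (add_nonneg ha hb)]

theorem inner_radial_sub_pos {φ : ℝ → ℝ} {R : ℝ} (hpos : ∀ s ∈ Ico 0 R, 0 < φ s)
    (hmono : StrictMonoOn (fun s => φ s * s) (Ico 0 R)) {u v : F} (hu : ‖u‖ < R)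
    (hv : ‖v‖ < R) (huv : u ≠ v) :
    0 < ⟪φ ‖u‖ • u - φ ‖v‖ • v, u - v⟫ := by
  have hu' : ‖u‖ ∈ Ico 0 R := ⟨norm_nonneg u, hu⟩
  have hv' : ‖v‖ ∈ Ico 0 R := ⟨norm_nonneg v, hv⟩
  rcases lt_trichotomy ‖u‖ ‖v‖ with hlt | heq | hgt
  · refine lt_of_lt_of_le ?_ (mul_sub_mul_norm_le_inner_smul_sub_smul u v
      (hpos _ hu').le (hpos _ hv').le)
    have := hmono hu' hv' hlt
    exact mul_pos_of_neg_of_neg (by simpa using this) (by linarith)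
  · rw [heq, ← smul_sub, real_inner_smul_left, real_inner_self_eq_norm_sq]
    exact mul_pos (hpos _ hv') (pow_pos (norm_pos_iff.mpr (sub_ne_zero.mpr huv)) 2)
  · refine lt_of_lt_of_le ?_ (mul_sub_mul_norm_le_inner_smul_sub_smul u v
      (hpos _ hu').le (hpos _ hv').le)
    have := hmono hv' hu' hgt
    exact mul_pos (by simpa using this) (by linarith)

end RadialMap

/-- The paper's `Ψ`. -/
noncomputable def strainLimitingFactor (α β s : ℝ) : ℝ := (1 - (β * s) ^ α) ^ (-1 / α)

section StrainLimitingFactor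

variable {α β : ℝ}

theorem one_sub_mul_rpow_pos (hα : 0 < α) (hβ : 0 < β) {s : ℝ} (hs : s ∈ Ico 0 (1 / β)) :
    0 < 1 - (β * s) ^ α := by
  have hβs : β * s < 1 := by
    have := (lt_div_iff₀' hβ).mp hs.2
    linarith
  linarith [rpow_lt_one (mul_nonneg hβ.le hs.1) hβs hα]

theorem strainLimitingFactor_pos (hα : 0 < α) (hβ : 0 < β) {s : ℝ} (hs : s ∈ Ico 0 (1 / β)) :
    0 < strainLimitingFactor α β s :=
  rpow_pos_of_pos (one_sub_mul_rpow_pos hα hβ hs) _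

theorem strainLimitingFactor_monotoneOn (hα : 0 < α) (hβ : 0 < β) :
    MonotoneOn (strainLimitingFactor α β) (Ico 0 (1 / β)) := by
  intro s hs t ht hst
  have hpow : (β * s) ^ α ≤ (β * t) ^ α :=
    rpow_le_rpow (mul_nonneg hβ.le hs.1) (mul_le_mul_of_nonneg_left hst hβ.le) hα.le
  exact rpow_le_rpow_of_nonpos (one_sub_mul_rpow_pos hα hβ ht) (by linarith)
    (by rw [neg_div]; exact neg_nonpos.mpr (by positivity))

end StrainLimitingFactor

theorem injective_of_inner_map_self_pos {E : Type*} [NormedAddCommGroup E]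
    [InnerProductSpace ℝ E] {J : E →L[ℝ] E} (hpos : ∀ x : E, x ≠ 0 → 0 < ⟪J x, x⟫) :
    Function.Injective J := by
  intro x y h
  by_contra hxy
  have := hpos (x - y) (sub_ne_zero.mpr hxy)
  rw [map_sub, h, sub_self, inner_zero_left] at this
  exact lt_irrefl _ this

theorem hyperelastic_stress_strictly_monotone_general
    {E : Type*} [NormedAddCommGroup E] [InnerProductSpace ℝ E]
    (J : E →L[ℝ] E) (hsym : ∀ x y : E, ⟪J x, y⟫ = ⟪x, J y⟫)
    (hpos : ∀ x : E, x ≠ 0 → 0 < ⟪J x, x⟫)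
    (α β : ℝ) (hα : 0 < α) (hβ : 0 < β)
    (ε₁ ε₂ : E) (h₁ : ‖J ε₁‖ < 1 / β) (h₂ : ‖J ε₂‖ < 1 / β) (hne : ε₁ ≠ ε₂) :
    0 < ⟪(1 - (β * ‖J ε₁‖) ^ α) ^ (-1 / α) • J (J ε₁) -
          (1 - (β * ‖J ε₂‖) ^ α) ^ (-1 / α) • J (J ε₂), ε₁ - ε₂⟫ := by
  have hpair := inner_radial_sub_pos (fun _ => strainLimitingFactor_pos hα hβ)
    ((strainLimitingFactor_monotoneOn hα hβ).strictMonoOn_mul_self (fun _ hs => hs.1)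
      (fun _ => strainLimitingFactor_pos hα hβ))
    h₁ h₂ ((injective_of_inner_map_self_pos hpos).ne hne)
  rwa [← map_sub J ε₁ ε₂, ← hsym, map_sub, map_smul, map_smul] at hpair

/-- With `J` a self-adjoint positive-definite operator (square root of the
elasticity tensor `𝔼 = J ∘ J`), the hyperelastic stress map
`S(ε) = (1 - (β ‖Jε‖)^α)^(-1/α) • J(Jε)` is strictly monotone on the set
`{ε : ‖Jε‖ < 1/β}`. -/
theorem hyperelastic_stress_strictly_monotone
    {E : Type*} [NormedAddCommGroup E] [InnerProductSpace ℝ E]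
    [FiniteDimensional ℝ E]
    (J : E →L[ℝ] E) (hsym : ∀ x y : E, ⟪J x, y⟫ = ⟪x, J y⟫)
    (hpos : ∀ x : E, x ≠ 0 → 0 < ⟪J x, x⟫)
    (α β : ℝ) (hα : 0 < α) (hβ : 0 < β)
    (ε₁ ε₂ : E) (h₁ : ‖J ε₁‖ < 1 / β) (h₂ : ‖J ε₂‖ < 1 / β) (hne : ε₁ ≠ ε₂) :
    0 < ⟪(1 - (β * ‖J ε₁‖) ^ α) ^ (-1 / α) • J (J ε₁) -
          (1 - (β * ‖J ε₂‖) ^ α) ^ (-1 / α) • J (J ε₂), ε₁ - ε₂⟫ :=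
  hyperelastic_stress_strictly_monotone_general J hsym hpos α β hα hβ ε₁ ε₂ h₁ h₂ hne
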